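/- Let h(x,y,z) = (s·x, s·y, (z + √2)/2) with s = √((z² + 2√2·z − 2)/(4z² − 4)), defined and differentiable on a neighborhood of any point with z > 1 in ℝ³. Let p = (x, y, √2) with x² + y² = 1, and let V = (u, v, w) ∈ ℝ³ satisfy xu + yv − √2·w = 0 (i.e., V is tangent at p to the hyperboloid x² + y² − z² = −1). Then the Fréchet derivative of h at p applied to V equals (−(u x²)/2 − (v y x)/2 + u, −(u x y)/2 − (v y²)/2 + v, (√2/4)(u x + v y)). -/

import Mathlib

open Filter Topology

noncomputable section

/-- The scaling factor s(z) = √((z² + 2√2 z − 2)/(4z² − 4)). -/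
def sFac (z : ℝ) : ℝ :=
  Real.sqrt ((z ^ 2 + 2 * Real.sqrt 2 * z - 2) / (4 * z ^ 2 - 4))

/-- The map h(x,y,z) = (s(z)·x, s(z)·y, (z + √2)/2). -/
def h3 (p : ℝ × ℝ × ℝ) : ℝ × ℝ × ℝ :=
  (sFac p.2.2 * p.1, sFac p.2.2 * p.2.1, (p.2.2 + Real.sqrt 2) / 2)

lemma hsq : Real.sqrt 2 * Real.sqrt 2 = 2 := Real.mul_self_sqrt (by norm_num)

lemma hasDerivAt_sFac : HasDerivAt sFac (-(Real.sqrt 2)/2) (Real.sqrt 2) := by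
  have h2 : Real.sqrt 2 ^ 2 = 2 := Real.sq_sqrt (by norm_num)
  have hnum : HasDerivAt (fun z : ℝ => z ^ 2 + 2 * Real.sqrt 2 * z - 2)
      (2 * Real.sqrt 2 + 2 * Real.sqrt 2) (Real.sqrt 2) := by
    have := ((hasDerivAt_pow 2 (Real.sqrt 2)).add
      ((hasDerivAt_id (Real.sqrt 2)).const_mul (2 * Real.sqrt 2))).sub_const 2
    refine this.congr_deriv ?_
    push_cast; ring
  have hden : HasDerivAt (fun z : ℝ => 4 * z ^ 2 - 4) (8 * Real.sqrt 2) (Real.sqrt 2) := by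
    have := ((hasDerivAt_pow 2 (Real.sqrt 2)).const_mul 4).sub_const 4
    refine this.congr_deriv ?_
    simp; ring
  have hden0 : 4 * Real.sqrt 2 ^ 2 - 4 ≠ 0 := by rw [h2]; norm_num
  have hq : HasDerivAt (fun z : ℝ => (z ^ 2 + 2 * Real.sqrt 2 * z - 2) / (4 * z ^ 2 - 4))
      (-(Real.sqrt 2)) (Real.sqrt 2) := by
    have := hnum.div hden hden0
    refine this.congr_deriv ?_
    rw [h2, mul_assoc 2 (Real.sqrt 2) (Real.sqrt 2), hsq]
    norm_num
    ring_nf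
  have hq1 : (Real.sqrt 2 ^ 2 + 2 * Real.sqrt 2 * Real.sqrt 2 - 2) / (4 * Real.sqrt 2 ^ 2 - 4) = 1 := by
    rw [h2, mul_assoc 2 (Real.sqrt 2) (Real.sqrt 2), hsq]; norm_num
  have hsqrt : HasDerivAt Real.sqrt
      (1 / (2 * Real.sqrt ((Real.sqrt 2 ^ 2 + 2 * Real.sqrt 2 * Real.sqrt 2 - 2) / (4 * Real.sqrt 2 ^ 2 - 4))))
      ((Real.sqrt 2 ^ 2 + 2 * Real.sqrt 2 * Real.sqrt 2 - 2) / (4 * Real.sqrt 2 ^ 2 - 4)) :=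
    Real.hasDerivAt_sqrt (by rw [hq1]; norm_num)
  have := hsqrt.comp (Real.sqrt 2) hq
  refine this.congr_deriv ?_
  rw [hq1]
  simp; ring
lemma sFac_sqrt2 : sFac (Real.sqrt 2) = 1 := by
  unfold sFac
  rw [Real.sq_sqrt (by norm_num : (0:ℝ) ≤ 2),
    mul_assoc 2 (Real.sqrt 2) (Real.sqrt 2), hsq]
  norm_num


/-- Example 4.1: the derivative of `h3` at a fixed point `p = (x,y,√2)` of the
circle `C`, applied to a tangent vector `(u,v,w)` of the hyperboloid at `p`. -/
theorem fderiv_h3_on_tangent (x y u v w : ℝ)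
    (hp : x ^ 2 + y ^ 2 = 1)
    (hV : x * u + y * v - Real.sqrt 2 * w = 0) :
    fderiv ℝ h3 (x, y, Real.sqrt 2) (u, v, w) =
      (-(u * x ^ 2) / 2 - v * y * x / 2 + u,
       -(u * x * y) / 2 - v * y ^ 2 / 2 + v,
       Real.sqrt 2 / 4 * (u * x + v * y)) := by
  set p₀ : ℝ × ℝ × ℝ := (x, y, Real.sqrt 2) with hp₀
  set π₁ : ℝ × ℝ × ℝ →L[ℝ] ℝ := ContinuousLinearMap.fst ℝ ℝ (ℝ × ℝ)
  set π₂ : ℝ × ℝ × ℝ →L[ℝ] ℝ :=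
    (ContinuousLinearMap.fst ℝ ℝ ℝ).comp (ContinuousLinearMap.snd ℝ ℝ (ℝ × ℝ))
  set π₃ : ℝ × ℝ × ℝ →L[ℝ] ℝ :=
    (ContinuousLinearMap.snd ℝ ℝ ℝ).comp (ContinuousLinearMap.snd ℝ ℝ (ℝ × ℝ))
  have hπ₁ : HasFDerivAt (fun p : ℝ × ℝ × ℝ => p.1) π₁ p₀ := π₁.hasFDerivAt
  have hπ₂ : HasFDerivAt (fun p : ℝ × ℝ × ℝ => p.2.1) π₂ p₀ := π₂.hasFDerivAt
  have hπ₃ : HasFDerivAt (fun p : ℝ × ℝ × ℝ => p.2.2) π₃ p₀ := π₃.hasFDerivAt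
  have hsF : HasFDerivAt (fun p : ℝ × ℝ × ℝ => sFac p.2.2) ((-(Real.sqrt 2)/2) • π₃) p₀ :=
    hasDerivAt_sFac.comp_hasFDerivAt (h₂ := sFac) (f := fun p : ℝ × ℝ × ℝ => p.2.2) p₀ hπ₃
  have h1 : HasFDerivAt (fun p : ℝ × ℝ × ℝ => sFac p.2.2 * p.1)
      (sFac (Real.sqrt 2) • π₁ + x • ((-(Real.sqrt 2)/2) • π₃)) p₀ := hsF.mul hπ₁
  have h2 : HasFDerivAt (fun p : ℝ × ℝ × ℝ => sFac p.2.2 * p.2.1)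
      (sFac (Real.sqrt 2) • π₂ + y • ((-(Real.sqrt 2)/2) • π₃)) p₀ := hsF.mul hπ₂
  have h3' : HasFDerivAt (fun p : ℝ × ℝ × ℝ => (p.2.2 + Real.sqrt 2) / 2)
      ((2 : ℝ)⁻¹ • π₃) p₀ := by
    have := (hπ₃.add_const (Real.sqrt 2)).mul_const (2 : ℝ)⁻¹
    simpa [div_eq_mul_inv] using this
  have hH : HasFDerivAt h3
      ((sFac (Real.sqrt 2) • π₁ + x • ((-(Real.sqrt 2)/2) • π₃)).prod
        ((sFac (Real.sqrt 2) • π₂ + y • ((-(Real.sqrt 2)/2) • π₃)).prod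
          ((2 : ℝ)⁻¹ • π₃))) p₀ := HasFDerivAt.prodMk h1 (HasFDerivAt.prodMk h2 h3')
  rw [hH.fderiv]
  have hw : Real.sqrt 2 * w = x * u + y * v := by linarith
  simp only [ContinuousLinearMap.prod_apply, ContinuousLinearMap.add_apply,
    ContinuousLinearMap.smul_apply, ContinuousLinearMap.coe_comp', Function.comp_apply,
    ContinuousLinearMap.coe_fst', ContinuousLinearMap.coe_snd', smul_eq_mul, sFac_sqrt2]
  refine Prod.ext ?_ (Prod.ext ?_ ?_)
  · show 1 * u + x * (-(Real.sqrt 2)/2 * w) = _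
    linear_combination (-x/2) * hw
  · show 1 * v + y * (-(Real.sqrt 2)/2 * w) = _
    linear_combination (-y/2) * hw
  · show (2:ℝ)⁻¹ * w = _
    have hpow : Real.sqrt 2 ^ 2 = 2 := Real.sq_sqrt (by norm_num)
    linear_combination (Real.sqrt 2/4) * hw - (w/4) * hpow
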